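/- Let A be an (α,β)-Frobenius extension of B with trace map tr. For every c in the centralizer C_A(B), there exists a unique element ψ(c) ∈ A such that tr(cx) = tr(x·ψ(c)) for all x ∈ A, and the resulting map ψ : C_A(B) → A is injective with image contained in the centralizer C_A(α(B)). -/

import Mathlib

/-!
Every `β`-twisted functional `A → B` is `x ↦ tr (x * a)`, so for `c` centralizing `B` the
functional `x ↦ tr (c * x)` yields `ψ(c)`, unique by right nondegeneracy of the trace form.
Since `A` is projective over `B`, its `B`-linear functionals separate points; twisting them by
`β⁻¹` shows that the trace form is also left nondegenerate, which gives injectivity.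
Finally `ψ(c) * α(b)` and `α(b) * ψ(c)` both represent `x ↦ tr (c * x) * b`.
-/

section FrobeniusTrace

variable {A : Type*} [Ring A] {B : Subring A} {α : A ≃+* A} {β : B ≃+* B} {tr : A →+ B}

theorem trace_beta_mul
    (htrbimod : ∀ (b b' : B) (x : A), tr ((β b : A) * x * α (b' : A)) = b * tr x * b')
    (b : B) (x : A) : tr ((β b : A) * x) = b * tr x := by
  simpa using htrbimod b 1 x

theorem trace_mul_alpha
    (htrbimod : ∀ (b b' : B) (x : A), tr ((β b : A) * x * α (b' : A)) = b * tr x * b')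
    (b : B) (x : A) : tr (x * α (b : A)) = tr x * b := by
  simpa using htrbimod 1 b x

theorem eq_of_forall_trace_mul_eq (htrnd : ∀ a : A, (∀ x : A, tr (x * a) = 0) → a = 0)
    {p q : A} (h : ∀ x : A, tr (x * p) = tr (x * q)) : p = q :=
  sub_eq_zero.mp <| htrnd _ fun x ↦ by rw [mul_sub, map_sub, h, sub_self]

variable (β) in
theorem eq_zero_of_forall_trace_mul_eq_zero [Module.Projective B A]
    (htrsurj : ∀ f : A →+ B, (∀ (b : B) (x : A), f ((β b : A) * x) = b * f x) →
      ∃ a : A, ∀ x : A, f x = tr (x * a))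
    {d : A} (hd : ∀ x : A, tr (d * x) = 0) : d = 0 := by
  refine (Module.forall_dual_apply_eq_zero_iff B d).mp fun φ ↦ ?_
  have htwisted : ∀ (b : B) (x : A), β.symm (φ ((β b : A) * x)) = b * β.symm (φ x) := by
    intro b x
    rw [show (β b : A) * x = β b • x from rfl, map_smul, smul_eq_mul, map_mul,
      RingEquiv.symm_apply_apply]
  obtain ⟨a, ha⟩ := htrsurj (β.symm.toAddMonoidHom.comp φ.toAddMonoidHom) htwisted
  have hφd : β.symm (φ d) = 0 := (ha d).trans (hd a)
  simpa using hφd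

theorem exists_trace_mul_eq_trace_mul
    (hleft : ∀ (b : B) (x : A), tr ((β b : A) * x) = b * tr x)
    (htrsurj : ∀ f : A →+ B, (∀ (b : B) (x : A), f ((β b : A) * x) = b * f x) →
      ∃ a : A, ∀ x : A, f x = tr (x * a))
    {c : A} (hc : ∀ b : B, c * (b : A) = (b : A) * c) :
    ∃ p : A, ∀ x : A, tr (c * x) = tr (x * p) :=
  htrsurj (tr.comp (AddMonoidHom.mulLeft c)) fun b x ↦ by
    simp only [AddMonoidHom.comp_apply, AddMonoidHom.coe_mulLeft]
    rw [← mul_assoc, hc, mul_assoc, hleft]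

theorem mul_alpha_eq_alpha_mul_of_forall_trace_mul_eq
    (htrbimod : ∀ (b b' : B) (x : A), tr ((β b : A) * x * α (b' : A)) = b * tr x * b')
    (htrnd : ∀ a : A, (∀ x : A, tr (x * a) = 0) → a = 0)
    {c p : A} (hp : ∀ x : A, tr (c * x) = tr (x * p)) (b : B) :
    p * α (b : A) = α (b : A) * p :=
  eq_of_forall_trace_mul_eq htrnd fun x ↦
    calc tr (x * (p * α (b : A)))
        _ = tr (x * p) * b := by rw [← mul_assoc, trace_mul_alpha htrbimod]
        _ = tr (c * x) * b := by rw [hp]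
        _ = tr (c * x * α (b : A)) := (trace_mul_alpha htrbimod b _).symm
        _ = tr (x * (α (b : A) * p)) := by rw [mul_assoc, hp, mul_assoc]

end FrobeniusTrace

theorem nakayama_exists_unique_injective
    {A : Type u} [Ring A] (B : Subring A) (α : A ≃+* A) (β : B ≃+* B)
    (hproj : Module.Projective B A)
    (tr : A →+ B)
    (htrbimod : ∀ (b b' : B) (x : A), tr ((β b : A) * x * α (b' : A)) = b * tr x * b')
    (htrnd : ∀ a : A, (∀ x : A, tr (x * a) = 0) → a = 0)
    (htrsurj : ∀ f : A →+ B, (∀ (b : B) (x : A), f ((β b : A) * x) = b * f x) →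
      ∃ a : A, ∀ x : A, f x = tr (x * a)) :
    -- existence and uniqueness of ψ(c) for each c ∈ C_A(B):
    (∀ c : A, (∀ b : B, c * (b : A) = (b : A) * c) →
      ∃! p : A, ∀ x : A, tr (c * x) = tr (x * p)) ∧
    -- injectivity of ψ:
    (∀ c c' p : A, (∀ b : B, c * (b : A) = (b : A) * c) →
      (∀ b : B, c' * (b : A) = (b : A) * c') →
      (∀ x : A, tr (c * x) = tr (x * p)) → (∀ x : A, tr (c' * x) = tr (x * p)) →
      c = c') ∧
    -- the image lies in C_A(α(B)):
    (∀ c p : A, (∀ b : B, c * (b : A) = (b : A) * c) →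
      (∀ x : A, tr (c * x) = tr (x * p)) →
      ∀ b : B, p * α (b : A) = α (b : A) * p) := by
  have := hproj
  refine ⟨fun c hc ↦ ?_, fun c c' p _ _ hp hp' ↦ ?_, fun c p _ hp b ↦ ?_⟩
  · obtain ⟨p, hp⟩ := exists_trace_mul_eq_trace_mul (trace_beta_mul htrbimod) htrsurj hc
    exact ⟨p, hp, fun q hq ↦ eq_of_forall_trace_mul_eq htrnd fun x ↦ (hq x).symm.trans (hp x)⟩
  · refine sub_eq_zero.mp <| eq_zero_of_forall_trace_mul_eq_zero β htrsurj fun x ↦ ?_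
    rw [sub_mul, map_sub, hp, hp', sub_self]
  · exact mul_alpha_eq_alpha_mul_of_forall_trace_mul_eq htrbimod htrnd hp b
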